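/- Let * be a continuous t-norm, T an algebra of truth values for *, and L = Taut(T,*) the real-valued logic induced by (T,*). Then L satisfies principle P2 if and only if L extends Łukasiewicz logic, i.e. Taut([0,1],⊙) ⊆ L, where x⊙y = max(0, x+y−1). -/

import Mathlib

open Set

noncomputable section

/-- The real unit interval `[0,1]` as a subset of `ℝ`. -/
def I01 : Set ℝ := Set.Icc 0 1

/-- A continuous t-norm on `[0,1]`. -/
structure ContTNorm where
  mul : ℝ → ℝ → ℝ
  maps_to : ∀ x ∈ I01, ∀ y ∈ I01, mul x y ∈ I01
  continuousOn : ContinuousOn (fun p : ℝ × ℝ => mul p.1 p.2) (I01 ×ˢ I01)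
  assoc : ∀ x ∈ I01, ∀ y ∈ I01, ∀ z ∈ I01, mul (mul x y) z = mul x (mul y z)
  comm : ∀ x ∈ I01, ∀ y ∈ I01, mul x y = mul y x
  mono : ∀ a ∈ I01, ∀ b ∈ I01, ∀ c ∈ I01, b ≤ c → mul a b ≤ mul a c
  one_mul' : ∀ x ∈ I01, mul 1 x = x

/-- The residuum of a t-norm: `x →* y := sup { c ∈ [0,1] | x * c ≤ y }`. -/
def resid (t : ContTNorm) (x y : ℝ) : ℝ :=
  sSup {c | c ∈ I01 ∧ t.mul x c ≤ y}

/-- An algebra of truth values for the t-norm `t`: a subset of `[0,1]` containing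
`0` and `1` and closed under `t.mul` and its residuum. -/
structure TruthAlg (t : ContTNorm) where
  carrier : Set ℝ
  subset : carrier ⊆ I01
  zero_mem : (0:ℝ) ∈ carrier
  one_mem : (1:ℝ) ∈ carrier
  mul_mem : ∀ x ∈ carrier, ∀ y ∈ carrier, t.mul x y ∈ carrier
  resid_mem : ∀ x ∈ carrier, ∀ y ∈ carrier, resid t x y ∈ carrier

/-- Propositional formulas over countably many variables with `&`, `→`, `⊥`. -/
inductive Formula : Type
  | var : ℕ → Formula
  | bot : Formula
  | conj : Formula → Formula → Formula
  | impl : Formula → Formula → Formula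

/-- `α ↔ β := (α → β) & (β → α)`. -/
def Formula.iff (a b : Formula) : Formula := .conj (.impl a b) (.impl b a)

/-- The valuation determined by an assignment `v` of reals to the variables. -/
def eval (t : ContTNorm) (v : ℕ → ℝ) : Formula → ℝ
  | .var i => v i
  | .bot => 0
  | .conj a b => t.mul (eval t v a) (eval t v b)
  | .impl a b => resid t (eval t v a) (eval t v b)

/-- A valuation into `(T, t)` is (identified with) an assignment of values of `T`
to the propositional variables. -/
def IsValuation (t : ContTNorm) (T : TruthAlg t) (v : ℕ → ℝ) : Prop :=
  ∀ i, v i ∈ T.carrier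

/-- The logic induced by `(T, t)`: all formulas true to degree 1 under every valuation. -/
def Taut (t : ContTNorm) (T : TruthAlg t) : Set Formula :=
  {α | ∀ v : ℕ → ℝ, IsValuation t T v → eval t v α = 1}

/-- Principle P1. -/
def P1 (L : Set Formula) : Prop :=
  ∀ (t : ContTNorm) (T : TruthAlg t), Taut t T = L →
    ∀ α β : Formula,
      (Formula.iff α β ∈ L ↔
        ∀ v : ℕ → ℝ, IsValuation t T v → (eval t v α = 1 ↔ eval t v β = 1))

/-- Principle P2. -/
def P2 (L : Set Formula) : Prop :=
  ∀ (t : ContTNorm) (T : TruthAlg t), Taut t T = L →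
    ∀ v w : ℕ → ℝ, IsValuation t T v → IsValuation t T w → v ≠ w →
      ∃ α : Formula, 0 < eval t v α ∧ eval t w α = 0

/-- The Gödel t-norm: minimum. -/
def minT : ContTNorm where
  mul := fun x y => min x y
  maps_to := by
    rintro x ⟨hx0, hx1⟩ y ⟨hy0, hy1⟩
    exact ⟨le_min hx0 hy0, min_le_of_left_le hx1⟩
  continuousOn := (continuous_fst.min continuous_snd).continuousOn
  assoc := fun x _ y _ z _ => min_assoc x y z
  comm := fun x _ y _ => min_comm x y
  mono := fun a _ b _ c _ h => min_le_min le_rfl h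
  one_mul' := by rintro x ⟨hx0, hx1⟩; exact min_eq_right hx1

/-- The Łukasiewicz t-norm: `x ⊙ y = max 0 (x + y - 1)`. -/
def lukT : ContTNorm where
  mul := fun x y => max 0 (x + y - 1)
  maps_to := by
    rintro x ⟨hx0, hx1⟩ y ⟨hy0, hy1⟩
    exact ⟨le_max_left _ _, max_le zero_le_one (by linarith)⟩
  continuousOn :=
    (continuous_const.max ((continuous_fst.add continuous_snd).sub continuous_const)).continuousOn
  assoc := by
    rintro x ⟨hx0, hx1⟩ y ⟨hy0, hy1⟩ z ⟨hz0, hz1⟩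
    simp only [max_def]
    split_ifs <;> linarith
  comm := by intro x _ y _; rw [add_comm]
  mono := by
    rintro a _ b _ c _ h
    exact max_le_max le_rfl (by linarith)
  one_mul' := by
    rintro x ⟨hx0, hx1⟩
    rw [show (1:ℝ) + x - 1 = x by ring, max_eq_right hx0]

/-- The product t-norm: ordinary multiplication. -/
def prodT : ContTNorm where
  mul := fun x y => x * y
  maps_to := by
    rintro x ⟨hx0, hx1⟩ y ⟨hy0, hy1⟩
    exact ⟨mul_nonneg hx0 hy0, by nlinarith⟩
  continuousOn := (continuous_fst.mul continuous_snd).continuousOn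
  assoc := fun x _ y _ z _ => mul_assoc x y z
  comm := fun x _ y _ => mul_comm x y
  mono := by rintro a ⟨ha0, _⟩ b _ c _ h; exact mul_le_mul_of_nonneg_left h ha0
  one_mul' := fun x _ => one_mul x

lemma ContTNorm.mul_zero' (t : ContTNorm) {x : ℝ} (hx : x ∈ I01) : t.mul x 0 = 0 := by
  have h01 : (0:ℝ) ∈ I01 := ⟨le_rfl, zero_le_one⟩
  have h11 : (1:ℝ) ∈ I01 := ⟨zero_le_one, le_rfl⟩
  have h1 : t.mul x 0 = t.mul 0 x := t.comm x hx 0 h01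
  have h2 : t.mul 0 x ≤ t.mul 0 1 := t.mono 0 h01 x hx 1 h11 hx.2
  have h3 : t.mul 0 1 = t.mul 1 0 := t.comm 0 h01 1 h11
  have h4 : t.mul 1 0 = 0 := t.one_mul' 0 h01
  have h5 : t.mul x 0 ∈ I01 := t.maps_to x hx 0 h01
  rw [h3, h4] at h2
  rw [h1] at h5 ⊢
  exact le_antisymm h2 h5.1

lemma resid_mem_I01 (t : ContTNorm) {x y : ℝ} (hx : x ∈ I01) (hy : y ∈ I01) :
    resid t x y ∈ I01 := by
  have h01 : (0:ℝ) ∈ I01 := ⟨le_rfl, zero_le_one⟩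
  have h0 : (0:ℝ) ∈ {c | c ∈ I01 ∧ t.mul x c ≤ y} :=
    ⟨h01, by rw [t.mul_zero' hx]; exact hy.1⟩
  have hbdd : BddAbove {c | c ∈ I01 ∧ t.mul x c ≤ y} := ⟨1, fun c hc => hc.1.2⟩
  constructor
  · exact le_csSup hbdd h0
  · exact csSup_le ⟨0, h0⟩ fun c hc => hc.1.2

/-- The full algebra of truth values `[0,1]` for a t-norm `t`. -/
def fullAlg (t : ContTNorm) : TruthAlg t where
  carrier := I01
  subset := le_rfl
  zero_mem := ⟨le_rfl, zero_le_one⟩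
  one_mem := ⟨zero_le_one, le_rfl⟩
  mul_mem := t.maps_to
  resid_mem := fun _ hx _ hy => resid_mem_I01 t hx hy

lemma resid_eq_one_of_le (t : ContTNorm) {x y : ℝ} (hx : x ∈ I01) (hy : y ∈ I01)
    (hxy : x ≤ y) : resid t x y = 1 := by
  have h11 : (1:ℝ) ∈ I01 := ⟨zero_le_one, le_rfl⟩
  have hmul : t.mul x 1 = x := by rw [t.comm x hx 1 h11]; exact t.one_mul' x hx
  have h1 : (1:ℝ) ∈ {c | c ∈ I01 ∧ t.mul x c ≤ y} := ⟨h11, by rw [hmul]; exact hxy⟩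
  have hbdd : BddAbove {c | c ∈ I01 ∧ t.mul x c ≤ y} := ⟨1, fun c hc => hc.1.2⟩
  exact le_antisymm (csSup_le ⟨1, h1⟩ fun c hc => hc.1.2) (le_csSup hbdd h1)

lemma resid_one_zero (t : ContTNorm) : resid t 1 0 = 0 := by
  have : {c | c ∈ I01 ∧ t.mul 1 c ≤ 0} = {0} := by
    ext c
    constructor
    · rintro ⟨hc, hle⟩
      have := t.one_mul' c hc
      have := hc.1
      simp only [Set.mem_singleton_iff]
      linarith [this, (t.one_mul' c hc) ▸ hle]
    · rintro rfl
      exact ⟨⟨le_rfl, zero_le_one⟩, by rw [t.mul_zero' ⟨zero_le_one, le_rfl⟩]⟩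
  rw [resid, this, csSup_singleton]

/-- The two-element algebra of truth values `{0,1}`. -/
def boolAlg (t : ContTNorm) : TruthAlg t where
  carrier := {0, 1}
  subset := by
    rintro x (rfl | rfl)
    · exact ⟨le_rfl, zero_le_one⟩
    · exact ⟨zero_le_one, le_rfl⟩
  zero_mem := Or.inl rfl
  one_mem := Or.inr rfl
  mul_mem := by
    have h01 : (0:ℝ) ∈ I01 := ⟨le_rfl, zero_le_one⟩
    have h11 : (1:ℝ) ∈ I01 := ⟨zero_le_one, le_rfl⟩
    rintro x (rfl | rfl) y (rfl | rfl)
    · exact Or.inl (t.mul_zero' h01)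
    · exact Or.inl (by rw [t.comm 0 h01 1 h11]; exact t.mul_zero' h11)
    · exact Or.inl (t.mul_zero' h11)
    · exact Or.inr (t.one_mul' 1 h11)
  resid_mem := by
    have h01 : (0:ℝ) ∈ I01 := ⟨le_rfl, zero_le_one⟩
    have h11 : (1:ℝ) ∈ I01 := ⟨zero_le_one, le_rfl⟩
    rintro x (rfl | rfl) y (rfl | rfl)
    · exact Or.inr (resid_eq_one_of_le t h01 h01 le_rfl)
    · exact Or.inr (resid_eq_one_of_le t h01 h11 zero_le_one)
    · exact Or.inl (resid_one_zero t)
    · exact Or.inr (resid_eq_one_of_le t h11 h11 le_rfl)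

/-- Classical logic: the logic induced by the two-element algebra `{0,1}`
(this is independent of the chosen continuous t-norm). -/
def ClassicalLogic : Set Formula := Taut minT (boolAlg minT)

/-!
Write `¬x := x →* 0`. Both sides are equivalent to the involutivity `¬¬x = x` of `T`.
Łukasiewicz logic proves `¬¬X → X`. Conversely, if `¬¬x ≠ x` then `¬x = 0`, and `Real.sign`, a
homomorphism on `0` and the non-zero-divisors, sends the valuation constantly `x` to the valuation
constantly `1`, so these two valuations violate P2.

An involutive `T` is either `{0, 1}` or contains some `a ∈ (0, 1)` with `¬a > 0`. In the second
case the powers of the iterated square roots of `a` give an additive generator `F` of `*`, with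
`F (x * y) = min (F x + F y) (F 0)`, and `1 - F / F 0` is a homomorphism into `([0, 1], ⊙)` that
is injective on `T`. Such an embedding carries Łukasiewicz tautologies over to `T`, and it reduces
P2 to separating two points of `[0, 1]` by a one-variable formula of Łukasiewicz logic.
-/

open Filter Topology

lemma zero_mem_I01 : (0 : ℝ) ∈ I01 := ⟨le_rfl, zero_le_one⟩

lemma one_mem_I01 : (1 : ℝ) ∈ I01 := ⟨zero_le_one, le_rfl⟩

lemma tendsto_div_two_pow (c : ℝ) : Tendsto (fun n : ℕ => c / 2 ^ n) atTop (𝓝 0) := by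
  have h := (tendsto_pow_atTop_nhds_zero_of_lt_one (r := (1 / 2 : ℝ)) (by norm_num)
    (by norm_num)).const_mul c
  simpa [div_eq_mul_inv] using h

namespace ContTNorm

variable (t : ContTNorm) {x y z : ℝ}

lemma mul_one' (hx : x ∈ I01) : t.mul x 1 = x := by
  rw [t.comm x hx 1 one_mem_I01, t.one_mul' x hx]

lemma zero_mul' (hx : x ∈ I01) : t.mul 0 x = 0 := by
  rw [t.comm 0 zero_mem_I01 x hx, t.mul_zero' hx]

lemma mono_left (hx : x ∈ I01) (hy : y ∈ I01) (hz : z ∈ I01) (h : x ≤ z) :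
    t.mul x y ≤ t.mul z y := by
  rw [t.comm x hx y hy, t.comm z hz y hy]
  exact t.mono y hy x hx z hz h

lemma mul_le_mul {x' y' : ℝ} (hx : x ∈ I01) (hy : y ∈ I01) (hx' : x' ∈ I01) (hy' : y' ∈ I01)
    (h₁ : x ≤ x') (h₂ : y ≤ y') : t.mul x y ≤ t.mul x' y' :=
  (t.mono_left hx hy hx' h₁).trans (t.mono x' hx' y hy y' hy' h₂)

lemma mul_le_left (hx : x ∈ I01) (hy : y ∈ I01) : t.mul x y ≤ x :=
  (t.mono x hx y hy 1 one_mem_I01 hy.2).trans_eq (t.mul_one' hx)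

lemma mul_le_right (hx : x ∈ I01) (hy : y ∈ I01) : t.mul x y ≤ y :=
  (t.comm x hx y hy).trans_le (t.mul_le_left hy hx)

lemma mul_mem (hx : x ∈ I01) (hy : y ∈ I01) : t.mul x y ∈ I01 := t.maps_to x hx y hy

lemma continuousOn_mul_left (hx : x ∈ I01) : ContinuousOn (t.mul x) I01 :=
  t.continuousOn.comp (continuous_const.prodMk continuous_id).continuousOn
    fun _ hc => Set.mk_mem_prod hx hc

lemma tendsto_mul {ι : Type*} {l : Filter ι} {f g : ι → ℝ} {a b : ℝ}
    (hf : ∀ i, f i ∈ I01) (hg : ∀ i, g i ∈ I01) (ha : a ∈ I01) (hb : b ∈ I01)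
    (hfa : Tendsto f l (𝓝 a)) (hgb : Tendsto g l (𝓝 b)) :
    Tendsto (fun i => t.mul (f i) (g i)) l (𝓝 (t.mul a b)) := by
  have hpair : Tendsto (fun i => (f i, g i)) l (𝓝[I01 ×ˢ I01] (a, b)) :=
    tendsto_nhdsWithin_iff.mpr
      ⟨hfa.prodMk_nhds hgb, Eventually.of_forall fun i => Set.mk_mem_prod (hf i) (hg i)⟩
  exact (t.continuousOn (a, b) (Set.mk_mem_prod ha hb)).tendsto.comp hpair

lemma exists_mul_eq (hx : x ∈ I01) (hy : y ∈ I01) (hyx : y ≤ x) : ∃ c ∈ I01, t.mul x c = y :=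
  intermediate_value_Icc zero_le_one (t.continuousOn_mul_left hx)
    (by rw [t.mul_zero' hx, t.mul_one' hx]; exact ⟨hy.1, hyx⟩)

lemma exists_mul_self_eq (hy : y ∈ I01) : ∃ x ∈ I01, t.mul x x = y :=
  intermediate_value_Icc zero_le_one
    (t.continuousOn.comp (continuous_id.prodMk continuous_id).continuousOn
      fun _ hc => Set.mk_mem_prod hc hc)
    (show y ∈ Icc (t.mul 0 0) (t.mul 1 1) by
      rw [t.mul_zero' zero_mem_I01, t.mul_one' one_mem_I01]; exact hy)

lemma mul_eq_right_of_idempotent {c : ℝ} (hc : c ∈ I01) (hcc : t.mul c c = c) (hz : z ∈ I01)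
    (hzc : z ≤ c) : t.mul c z = z := by
  obtain ⟨w, hw, rfl⟩ := t.exists_mul_eq hc hz hzc
  rw [← t.assoc c hc c hc w hw, hcc]

end ContTNorm

section Residuum

variable {t : ContTNorm} {x y c : ℝ}

lemma mul_resid_le (hx : x ∈ I01) (hy : y ∈ I01) : t.mul x (resid t x y) ≤ y := by
  have hclosed : IsClosed {c | c ∈ I01 ∧ t.mul x c ≤ y} :=
    (t.continuousOn_mul_left hx).preimage_isClosed_of_isClosed isClosed_Icc isClosed_Iic
  have hne : {c | c ∈ I01 ∧ t.mul x c ≤ y}.Nonempty :=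
    ⟨0, zero_mem_I01, by rw [t.mul_zero' hx]; exact hy.1⟩
  exact ((isCompact_Icc.of_isClosed_subset hclosed fun _ hc => hc.1).sSup_mem hne).2

lemma le_resid (hc : c ∈ I01) (h : t.mul x c ≤ y) : c ≤ resid t x y :=
  le_csSup ⟨1, fun _ hz => hz.1.2⟩ ⟨hc, h⟩

lemma le_resid_iff (hx : x ∈ I01) (hy : y ∈ I01) (hc : c ∈ I01) :
    c ≤ resid t x y ↔ t.mul x c ≤ y :=
  ⟨fun h => (t.mono x hx c hc _ (resid_mem_I01 t hx hy) h).trans (mul_resid_le hx hy),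
    le_resid hc⟩

lemma mul_resid (hx : x ∈ I01) (hy : y ∈ I01) : t.mul x (resid t x y) = min x y := by
  rcases le_total x y with hxy | hyx
  · rw [resid_eq_one_of_le t hx hy hxy, t.mul_one' hx, min_eq_left hxy]
  · obtain ⟨c, hc, hxc⟩ := t.exists_mul_eq hx hy hyx
    rw [min_eq_right hyx]
    refine (mul_resid_le hx hy).antisymm ?_
    calc y = t.mul x c := hxc.symm
      _ ≤ t.mul x (resid t x y) :=
        t.mono x hx c hc _ (resid_mem_I01 t hx hy) (le_resid hc hxc.le)

lemma resid_eq_one_iff (hx : x ∈ I01) (hy : y ∈ I01) : resid t x y = 1 ↔ x ≤ y := by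
  refine ⟨fun h => ?_, resid_eq_one_of_le t hx hy⟩
  simpa [t.mul_one' hx] using (le_resid_iff hx hy one_mem_I01).mp h.ge

lemma resid_anti_left {x' : ℝ} (hx : x ∈ I01) (hx' : x' ∈ I01) (hy : y ∈ I01) (h : x ≤ x') :
    resid t x' y ≤ resid t x y :=
  le_resid (resid_mem_I01 t hx' hy)
    ((t.mono_left hx (resid_mem_I01 t hx' hy) hx' h).trans (mul_resid_le hx' hy))

lemma le_resid_right (hx : x ∈ I01) (hy : y ∈ I01) : y ≤ resid t x y :=
  le_resid hy (t.mul_le_right hx hy)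

lemma resid_zero_left (hy : y ∈ I01) : resid t 0 y = 1 :=
  resid_eq_one_of_le t zero_mem_I01 hy hy.1

lemma resid_one_left (hy : y ∈ I01) : resid t 1 y = y := by
  have h := mul_resid (t := t) one_mem_I01 hy
  rwa [t.one_mul' _ (resid_mem_I01 t one_mem_I01 hy), min_eq_right hy.2] at h

lemma mul_neg_self (hx : x ∈ I01) : t.mul x (resid t x 0) = 0 := by
  rw [mul_resid hx zero_mem_I01, min_eq_right hx.1]

lemma le_neg_iff (hx : x ∈ I01) (hc : c ∈ I01) : c ≤ resid t x 0 ↔ t.mul x c = 0 := by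
  rw [le_resid_iff hx zero_mem_I01 hc]
  exact ⟨fun h => h.antisymm (t.mul_mem hx hc).1, le_of_eq⟩

lemma le_neg_neg (hx : x ∈ I01) : x ≤ resid t (resid t x 0) 0 := by
  rw [le_neg_iff (resid_mem_I01 t hx zero_mem_I01) hx,
    t.comm _ (resid_mem_I01 t hx zero_mem_I01) x hx, mul_neg_self hx]

lemma neg_neg_neg (hx : x ∈ I01) : resid t (resid t (resid t x 0) 0) 0 = resid t x 0 :=
  (resid_anti_left hx (resid_mem_I01 t (resid_mem_I01 t hx zero_mem_I01) zero_mem_I01)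
    zero_mem_I01 (le_neg_neg hx)).antisymm (le_neg_neg (resid_mem_I01 t hx zero_mem_I01))

lemma pos_of_neg_eq_zero (hx : x ∈ I01) (h : resid t x 0 = 0) : 0 < x := by
  refine hx.1.lt_of_ne fun h0 => ?_
  rw [← h0, resid_zero_left zero_mem_I01] at h
  exact one_ne_zero h

lemma neg_eq_zero_of_le (hx : x ∈ I01) (hy : y ∈ I01) (hNx : resid t x 0 = 0) (h : x ≤ y) :
    resid t y 0 = 0 :=
  ((resid_anti_left hx hy zero_mem_I01 h).trans_eq hNx).antisymm
    (resid_mem_I01 t hy zero_mem_I01).1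

lemma neg_mul_eq_zero (hx : x ∈ I01) (hy : y ∈ I01) (hNx : resid t x 0 = 0)
    (hNy : resid t y 0 = 0) : resid t (t.mul x y) 0 = 0 := by
  have hxy := t.mul_mem hx hy
  set n := resid t (t.mul x y) 0
  have hn : n ∈ I01 := resid_mem_I01 t hxy zero_mem_I01
  have hyn : t.mul y n = 0 := by
    have h := (le_neg_iff hx (t.mul_mem hy hn)).mpr
      (by rw [← t.assoc x hx y hy n hn]; exact mul_neg_self hxy)
    exact (h.trans_eq hNx).antisymm (t.mul_mem hy hn).1
  exact ((le_neg_iff hy hn).mpr hyn).trans_eq hNy |>.antisymm hn.1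

lemma neg_eq_zero_of_idempotent (hc : c ∈ I01) (hcc : t.mul c c = c) (hc0 : 0 < c) :
    resid t c 0 = 0 := by
  have hn := resid_mem_I01 t hc zero_mem_I01
  rcases le_total (resid t c 0) c with h | h
  · rw [← t.mul_eq_right_of_idempotent hc hcc hn h, mul_neg_self hc]
  · have := (hcc.symm.trans_le (t.mono c hc c hc _ hn h)).trans_eq (mul_neg_self hc)
    linarith

lemma lt_of_neg_eq_zero (hc : c ∈ I01) (hy : y ∈ I01) (hNc : resid t c 0 = 0)
    (hNy : 0 < resid t y 0) : y < c := by
  by_contra! h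
  exact hNy.not_ge ((resid_anti_left hc hy zero_mem_I01 h).trans_eq hNc)

end Residuum

namespace ContTNorm

def pow (t : ContTNorm) (x : ℝ) : ℕ → ℝ
  | 0 => 1
  | n + 1 => t.mul (pow t x n) x

variable (t : ContTNorm) {x y : ℝ}

lemma pow_mem (hx : x ∈ I01) (n : ℕ) : t.pow x n ∈ I01 := by
  induction n with
  | zero => exact one_mem_I01
  | succ n ih => exact t.mul_mem ih hx

lemma pow_one (hx : x ∈ I01) : t.pow x 1 = x := t.one_mul' x hx

lemma pow_add (hx : x ∈ I01) (m n : ℕ) : t.pow x (m + n) = t.mul (t.pow x m) (t.pow x n) := by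
  induction n with
  | zero => exact (t.mul_one' (t.pow_mem hx m)).symm
  | succ n ih =>
    change t.mul (t.pow x (m + n)) x = t.mul (t.pow x m) (t.mul (t.pow x n) x)
    rw [ih, t.assoc _ (t.pow_mem hx m) _ (t.pow_mem hx n) x hx]

lemma pow_antitone (hx : x ∈ I01) : Antitone (t.pow x) :=
  antitone_nat_of_succ_le fun n => t.mul_le_left (t.pow_mem hx n) hx

lemma pow_mul_self (hx : x ∈ I01) (n : ℕ) : t.pow (t.mul x x) n = t.pow x (2 * n) := by
  induction n with
  | zero => rfl
  | succ n ih =>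
    have h2 : t.pow x 2 = t.mul x x := by
      change t.mul (t.pow x 1) x = _
      rw [t.pow_one hx]
    change t.mul (t.pow (t.mul x x) n) (t.mul x x) = _
    rw [ih, ← h2, ← t.pow_add hx, Nat.mul_succ]

lemma exists_idempotent_tendsto_pow (hx : x ∈ I01) :
    ∃ c ∈ I01, Tendsto (t.pow x) atTop (𝓝 c) ∧ t.mul c c = c ∧ c ≤ x := by
  have hbdd : BddBelow (Set.range (t.pow x)) :=
    ⟨0, by rintro _ ⟨n, rfl⟩; exact (t.pow_mem hx n).1⟩
  have htend := tendsto_atTop_ciInf (t.pow_antitone hx) hbdd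
  set c := ⨅ n, t.pow x n
  have hcx : c ≤ x := (ciInf_le hbdd 1).trans_eq (t.pow_one hx)
  have hc : c ∈ I01 := ⟨le_ciInf fun n => (t.pow_mem hx n).1, hcx.trans hx.2⟩
  refine ⟨c, hc, htend, tendsto_nhds_unique
    (t.tendsto_mul (t.pow_mem hx) (t.pow_mem hx) hc hc htend htend) ?_, hcx⟩
  exact (htend.comp (tendsto_atTop_mono (fun n => Nat.le_add_left n n) tendsto_id)).congr
    fun n => t.pow_add hx n n

lemma exists_pow_eq_zero (hx : x ∈ I01) (hN : 0 < resid t x 0) : ∃ n, t.pow x n = 0 := by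
  obtain ⟨c, hc, htend, hcc, hcx⟩ := t.exists_idempotent_tendsto_pow hx
  have hc0 : c = 0 := by
    by_contra h
    exact (lt_of_neg_eq_zero hc hx (neg_eq_zero_of_idempotent hc hcc (hc.1.lt_of_ne' h))
      hN).not_ge hcx
  rw [hc0] at htend
  obtain ⟨n, hn⟩ := (htend.eventually (ge_mem_nhds hN)).exists
  have hNx := resid_mem_I01 t hx zero_mem_I01
  refine ⟨n + 1, ((t.mono_left (t.pow_mem hx n) hx hNx hn).trans_eq ?_).antisymm
    (t.pow_mem hx (n + 1)).1⟩
  rw [t.comm _ hNx x hx, mul_neg_self hx]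

/-- The idempotent limit of the powers of `s` also fixes `m`, hence is positive, and so it fixes
every `y` with `¬y > 0`. -/
lemma mul_eq_right_of_mul_eq {s m : ℝ} (hs : s ∈ I01) (hm : m ∈ I01) (hm0 : 0 < m)
    (hsm : t.mul s m = m) (hy : y ∈ I01) (hNy : 0 < resid t y 0) : t.mul s y = y := by
  obtain ⟨c, hc, htend, hcc, hcs⟩ := t.exists_idempotent_tendsto_pow hs
  have hpow : ∀ n, t.mul (t.pow s n) m = m := by
    intro n
    induction n with
    | zero => exact t.one_mul' m hm
    | succ n ih =>
      change t.mul (t.mul (t.pow s n) s) m = m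
      rw [t.assoc _ (t.pow_mem hs n) s hs m hm, hsm, ih]
  have hcm : t.mul c m = m := tendsto_nhds_unique
    (t.tendsto_mul (t.pow_mem hs) (fun _ => hm) hc hm htend tendsto_const_nhds)
    (by simp only [hpow]; exact tendsto_const_nhds)
  have hc0 : 0 < c := hc.1.lt_of_ne fun h => by
    rw [← h, t.zero_mul' hm] at hcm
    exact hm0.ne hcm
  have hyc := lt_of_neg_eq_zero hc hy (neg_eq_zero_of_idempotent hc hcc hc0) hNy
  refine (t.mul_le_right hs hy).antisymm ?_
  calc y = t.mul c y := (t.mul_eq_right_of_idempotent hc hcc hy hyc.le).symm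
    _ ≤ t.mul s y := t.mono_left hc hy hs hcs

end ContTNorm

/-- If `x < y := ¬¬x`, then `s := y → x` fixes `m := ¬x > 0`, hence also `y`, contradicting
`s * y = x`. -/
lemma neg_neg_eq_of_neg_pos {t : ContTNorm} {x : ℝ} (hx : x ∈ I01) (hN : 0 < resid t x 0) :
    resid t (resid t x 0) 0 = x := by
  set m := resid t x 0
  set y := resid t m 0
  have hm : m ∈ I01 := resid_mem_I01 t hx zero_mem_I01
  have hy : y ∈ I01 := resid_mem_I01 t hm zero_mem_I01
  refine ((le_neg_neg hx).lt_or_eq.resolve_left fun hxy => ?_).symm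
  have hx0 : 0 < x := hx.1.lt_of_ne fun h => by
    have hy0 : y = 0 := by simp only [y, m, ← h, resid_zero_left zero_mem_I01, resid_one_zero]
    linarith
  have hNy : resid t y 0 = m := neg_neg_neg hx
  set s := resid t y x
  have hs : s ∈ I01 := resid_mem_I01 t hy hx
  have hys : t.mul y s = x := by rw [mul_resid hy hx, min_eq_right hxy.le]
  have hym : t.mul y m = 0 := by rw [← hNy]; exact mul_neg_self hy
  have hms : m ≤ s := by
    by_contra! h
    have := t.mono y hy s hs m hm h.le
    rw [hys, hym] at this
    linarith
  have hsm : t.mul s m = m := by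
    have hr : resid t s m ≤ m := (le_neg_iff hx (resid_mem_I01 t hs hm)).mpr (by
      rw [← hys, t.assoc y hy s hs _ (resid_mem_I01 t hs hm), mul_resid hs hm,
        min_eq_right hms, hym])
    refine (t.mul_le_right hs hm).antisymm ?_
    calc m = t.mul s (resid t s m) := by rw [mul_resid hs hm, min_eq_right hms]
      _ ≤ t.mul s m := t.mono s hs _ (resid_mem_I01 t hs hm) m hm hr
  have hsy := t.mul_eq_right_of_mul_eq hs hm hN hsm hy (hNy ▸ hN)
  rw [t.comm s hs y hy, hys] at hsy
  exact hxy.ne hsy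

namespace ContTNorm

def powIndex (t : ContTNorm) (b x : ℝ) : ℕ := sInf {m | t.pow b m ≤ x}

variable (t : ContTNorm) {b c x y : ℝ}

lemma powIndex_le {j : ℕ} (h : t.pow b j ≤ x) : t.powIndex b x ≤ j := Nat.sInf_le h

lemma powIndex_le_iff (hb : b ∈ I01) (hnil : ∃ m, t.pow b m = 0) (hx : 0 ≤ x) {j : ℕ} :
    t.powIndex b x ≤ j ↔ t.pow b j ≤ x := by
  obtain ⟨m, hm⟩ := hnil
  have hmem : t.pow b (t.powIndex b x) ≤ x := Nat.sInf_mem (s := {m | t.pow b m ≤ x})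
    ⟨m, show t.pow b m ≤ x from hm ▸ hx⟩
  exact ⟨fun h => (t.pow_antitone hb h).trans hmem, t.powIndex_le⟩

lemma pow_powIndex_le (hb : b ∈ I01) (hnil : ∃ m, t.pow b m = 0) (hx : 0 ≤ x) :
    t.pow b (t.powIndex b x) ≤ x :=
  (t.powIndex_le_iff hb hnil hx).mp le_rfl

lemma le_pow_powIndex_sub_one (hx : x ∈ I01) : x ≤ t.pow b (t.powIndex b x - 1) := by
  rcases Nat.eq_zero_or_pos (t.powIndex b x) with h | h
  · rw [h]
    exact hx.2
  · exact (not_le.mp (Nat.notMem_of_lt_sInf (s := {m | t.pow b m ≤ x})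
      (Nat.sub_lt h one_pos))).le

lemma powIndex_one : t.powIndex b 1 = 0 :=
  Nat.le_zero.mp (t.powIndex_le (show t.pow b 0 ≤ 1 from le_rfl))

lemma powIndex_anti (hb : b ∈ I01) (hnil : ∃ m, t.pow b m = 0) (hx : 0 ≤ x) (hxy : x ≤ y) :
    t.powIndex b y ≤ t.powIndex b x :=
  (t.powIndex_le_iff hb hnil (hx.trans hxy)).mpr ((t.pow_powIndex_le hb hnil hx).trans hxy)

lemma two_le_powIndex (hb : b ∈ I01) (hnil : ∃ m, t.pow b m = 0) (hx : 0 ≤ x) (hxb : x < b) :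
    2 ≤ t.powIndex b x := by
  by_contra! h
  have := (t.powIndex_le_iff hb hnil hx).mp (Nat.le_of_lt_succ h)
  rw [t.pow_one hb] at this
  linarith

lemma pow_succ_lt (hb : b ∈ I01) (hnil : ∃ m, t.pow b m = 0) {j : ℕ}
    (hpos : 0 < t.pow b (j + 1)) : t.pow b (j + 1) < t.pow b j := by
  refine (t.pow_antitone hb j.le_succ).lt_of_ne fun heq => ?_
  obtain ⟨m, hm⟩ := hnil
  have hconst : ∀ i, t.pow b (j + i) = t.pow b j := by
    intro i
    induction i with
    | zero => rfl
    | succ i ih =>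
      change t.mul (t.pow b (j + i)) b = _
      rw [ih]
      exact heq
  have := t.pow_antitone hb (Nat.le_add_left m j)
  rw [hconst, hm] at this
  linarith [t.pow_antitone hb j.le_succ]

lemma powIndex_mul_le (hb : b ∈ I01) (hnil : ∃ m, t.pow b m = 0) (hx : x ∈ I01) (hy : y ∈ I01) :
    t.powIndex b (t.mul x y) ≤ t.powIndex b x + t.powIndex b y := by
  rw [t.powIndex_le_iff hb hnil (t.mul_mem hx hy).1, t.pow_add hb]
  exact t.mul_le_mul (t.pow_mem hb _) (t.pow_mem hb _) hx hy (t.pow_powIndex_le hb hnil hx.1)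
    (t.pow_powIndex_le hb hnil hy.1)

lemma add_powIndex_le_of_pos (hb : b ∈ I01) (hnil : ∃ m, t.pow b m = 0) (hx : x ∈ I01)
    (hy : y ∈ I01) (hxy : 0 < t.mul x y) :
    t.powIndex b x + t.powIndex b y ≤ t.powIndex b (t.mul x y) + 2 := by
  set k := t.powIndex b (t.mul x y)
  by_contra! h
  have hle : t.mul x y ≤ t.pow b (k + 1) :=
    calc t.mul x y
        ≤ t.mul (t.pow b (t.powIndex b x - 1)) (t.pow b (t.powIndex b y - 1)) :=
          t.mul_le_mul hx hy (t.pow_mem hb _) (t.pow_mem hb _) (t.le_pow_powIndex_sub_one hx)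
            (t.le_pow_powIndex_sub_one hy)
      _ = t.pow b (t.powIndex b x - 1 + (t.powIndex b y - 1)) := (t.pow_add hb _ _).symm
      _ ≤ t.pow b (k + 1) := t.pow_antitone hb (by omega)
  have hlt := t.pow_succ_lt hb hnil (hxy.trans_le hle)
  linarith [t.pow_powIndex_le hb hnil (t.mul_mem hx hy).1]

lemma powIndex_resid_add_le (hb : b ∈ I01) (hnil : ∃ m, t.pow b m = 0) (hx : x ∈ I01)
    (hy : y ∈ I01) : t.powIndex b (resid t x y) + t.powIndex b x ≤ t.powIndex b 0 + 1 := by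
  have hk := t.powIndex_anti hb hnil le_rfl hx.1
  set j := t.powIndex b 0 + 1 - t.powIndex b x
  have hj : t.pow b j ≤ resid t x y := by
    refine le_resid (t.pow_mem hb j) ?_
    calc t.mul x (t.pow b j)
        ≤ t.mul (t.pow b (t.powIndex b x - 1)) (t.pow b j) :=
          t.mono_left hx (t.pow_mem hb j) (t.pow_mem hb _) (t.le_pow_powIndex_sub_one hx)
      _ = t.pow b (t.powIndex b x - 1 + j) := (t.pow_add hb _ _).symm
      _ ≤ t.pow b (t.powIndex b 0) := t.pow_antitone hb (by omega)
      _ ≤ y := (t.pow_powIndex_le hb hnil le_rfl).trans hy.1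
  have := t.powIndex_le hj
  omega

lemma powIndex_le_two_mul (hc : c ∈ I01) (hnil : ∃ m, t.pow (t.mul c c) m = 0) (hx : 0 ≤ x) :
    t.powIndex c x ≤ 2 * t.powIndex (t.mul c c) x :=
  t.powIndex_le (by
    rw [← t.pow_mul_self hc]
    exact t.pow_powIndex_le (t.mul_mem hc hc) hnil hx)

lemma two_mul_powIndex_le (hc : c ∈ I01) (hnil : ∃ m, t.pow c m = 0) (hx : 0 ≤ x) :
    2 * t.powIndex (t.mul c c) x ≤ t.powIndex c x + 1 := by
  set k := t.powIndex c x
  have : t.powIndex (t.mul c c) x ≤ (k + 1) / 2 :=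
    t.powIndex_le (by
      rw [t.pow_mul_self hc]
      exact (t.pow_antitone hc (by omega)).trans (t.pow_powIndex_le hc hnil hx))
  omega

end ContTNorm

lemma tendsto_div_two_pow_iInf {k : ℕ → ℕ} (hk : ∀ n, k (n + 1) ≤ 2 * k n) :
    Tendsto (fun n => (k n : ℝ) / 2 ^ n) atTop (𝓝 (⨅ n, (k n : ℝ) / 2 ^ n)) := by
  refine tendsto_atTop_ciInf (antitone_nat_of_succ_le fun n => ?_) ⟨0, ?_⟩
  · have : (k (n + 1) : ℝ) ≤ 2 * k n := by exact_mod_cast hk n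
    rw [div_le_div_iff₀ (by positivity) (by positivity), pow_succ]
    nlinarith [pow_pos (two_pos (α := ℝ)) n]
  · rintro _ ⟨n, rfl⟩
    positivity

lemma sub_one_div_two_pow_le_iInf {k : ℕ → ℕ} (hk₁ : ∀ n, k (n + 1) ≤ 2 * k n)
    (hk₂ : ∀ n, 2 * k n ≤ k (n + 1) + 1) (n : ℕ) :
    ((k n : ℝ) - 1) / 2 ^ n ≤ ⨅ m, (k m : ℝ) / 2 ^ m := by
  have hmono : Monotone fun n => ((k n : ℝ) - 1) / 2 ^ n := monotone_nat_of_le_succ fun n => by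
    have : 2 * (k n : ℝ) ≤ k (n + 1) + 1 := by exact_mod_cast hk₂ n
    rw [div_le_div_iff₀ (by positivity) (by positivity), pow_succ]
    nlinarith [pow_pos (two_pos (α := ℝ)) n]
  refine hmono.ge_of_tendsto ?_ n
  simpa [sub_div] using (tendsto_div_two_pow_iInf hk₁).sub (tendsto_div_two_pow 1)

def Formula.neg (a : Formula) : Formula := .impl a .bot

def Formula.substAll : Formula → Formula → Formula
  | .var _, β => β
  | .bot, _ => .bot
  | .conj a b, β => .conj (a.substAll β) (b.substAll β)
  | .impl a b, β => .impl (a.substAll β) (b.substAll β)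

section Eval

variable {t : ContTNorm} {v : ℕ → ℝ}

lemma eval_substAll (α β : Formula) :
    eval t v (α.substAll β) = eval t (fun _ => eval t v β) α := by
  induction α with
  | var => rfl
  | bot => rfl
  | conj a b iha ihb => exact congrArg₂ t.mul iha ihb
  | impl a b iha ihb => exact congrArg₂ (resid t) iha ihb

lemma eval_mem_carrier {T : TruthAlg t} (hv : IsValuation t T v) (α : Formula) :
    eval t v α ∈ T.carrier := by
  induction α with
  | var i => exact hv i
  | bot => exact T.zero_mem
  | conj a b iha ihb => exact T.mul_mem _ iha _ ihb
  | impl a b iha ihb => exact T.resid_mem _ iha _ ihb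

end Eval

structure IsHomOn (t t' : ContTNorm) (S : Set ℝ) (φ : ℝ → ℝ) : Prop where
  mapsTo : MapsTo φ S I01
  map_zero : φ 0 = 0
  map_mul : ∀ x ∈ S, ∀ y ∈ S, φ (t.mul x y) = t'.mul (φ x) (φ y)
  map_resid : ∀ x ∈ S, ∀ y ∈ S, φ (resid t x y) = resid t' (φ x) (φ y)

namespace IsHomOn

variable {t t' : ContTNorm} {S S' : Set ℝ} {T : TruthAlg t} {φ : ℝ → ℝ}

lemma mono (h : IsHomOn t t' S φ) (hS : S' ⊆ S) : IsHomOn t t' S' φ where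
  mapsTo := h.mapsTo.mono_left hS
  map_zero := h.map_zero
  map_mul x hx y hy := h.map_mul x (hS hx) y (hS hy)
  map_resid x hx y hy := h.map_resid x (hS hx) y (hS hy)

lemma map_one (h : IsHomOn t t' S φ) (h0 : (0 : ℝ) ∈ S) : φ 1 = 1 := by
  have h1 := h.map_resid 0 h0 0 h0
  rwa [resid_zero_left zero_mem_I01, h.map_zero, resid_zero_left zero_mem_I01] at h1

lemma eval_comp (h : IsHomOn t t' T.carrier φ) {v : ℕ → ℝ} (hv : IsValuation t T v)
    (α : Formula) : eval t' (fun i => φ (v i)) α = φ (eval t v α) := by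
  induction α with
  | var => rfl
  | bot => exact h.map_zero.symm
  | conj a b iha ihb =>
    rw [eval, eval, iha, ihb, h.map_mul _ (eval_mem_carrier hv a) _ (eval_mem_carrier hv b)]
  | impl a b iha ihb =>
    rw [eval, eval, iha, ihb, h.map_resid _ (eval_mem_carrier hv a) _ (eval_mem_carrier hv b)]

lemma injOn (h : IsHomOn t t' T.carrier φ) (h1 : ∀ x ∈ T.carrier, φ x = 1 → x = 1) :
    InjOn φ T.carrier := by
  have hle : ∀ x ∈ T.carrier, ∀ y ∈ T.carrier, φ x = φ y → x ≤ y := fun x hx y hy hxy =>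
    (resid_eq_one_iff (T.subset hx) (T.subset hy)).mp <| h1 _ (T.resid_mem x hx y hy) <| by
      rw [h.map_resid x hx y hy, hxy]
      exact resid_eq_one_of_le t' (h.mapsTo hy) (h.mapsTo hy) le_rfl
  exact fun x hx y hy hxy => (hle x hx y hy hxy).antisymm (hle y hy x hx hxy.symm)

lemma taut_subset (h : IsHomOn t t' T.carrier φ) (hinj : InjOn φ T.carrier) :
    Taut t' (fullAlg t') ⊆ Taut t T := fun α hα v hv =>
  hinj (eval_mem_carrier hv α) T.one_mem <| by
    rw [← h.eval_comp hv, h.map_one T.zero_mem]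
    exact hα _ fun i => h.mapsTo (hv i)

end IsHomOn

lemma isHomOn_id_boolAlg (t : ContTNorm) : IsHomOn t lukT (boolAlg t).carrier id where
  mapsTo := (boolAlg t).subset
  map_zero := rfl
  map_mul := by
    rintro x (rfl | rfl) y hy
    · simp only [id, t.zero_mul' ((boolAlg t).subset hy), lukT.zero_mul' ((boolAlg t).subset hy)]
    · simp only [id, t.one_mul' y ((boolAlg t).subset hy), lukT.one_mul' y ((boolAlg t).subset hy)]
  map_resid := by
    rintro x (rfl | rfl) y hy
    · simp only [id, resid_zero_left ((boolAlg t).subset hy)]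
    · simp only [id, resid_one_left ((boolAlg t).subset hy)]

section Lukasiewicz

variable {x y : ℝ}

lemma resid_luk (hx : x ∈ I01) (hy : y ∈ I01) : resid lukT x y = min 1 (1 - x + y) := by
  have hset : {c | c ∈ I01 ∧ lukT.mul x c ≤ y} = Icc 0 (min 1 (1 - x + y)) := by
    ext c
    simp only [I01, lukT, Set.mem_Icc, max_le_iff, le_min_iff]
    constructor
    · rintro ⟨⟨hc0, hc1⟩, -, h⟩
      exact ⟨hc0, hc1, by linarith⟩
    · rintro ⟨hc0, hc1, h⟩
      exact ⟨⟨hc0, hc1⟩, hy.1, by linarith⟩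
  rw [resid, hset, csSup_Icc (le_min zero_le_one (by linarith [hx.2, hy.1]))]

lemma resid_luk_zero (hx : x ∈ I01) : resid lukT x 0 = 1 - x := by
  rw [resid_luk hx zero_mem_I01, min_eq_right (by linarith [hx.1])]
  ring

lemma neg_neg_impl_mem_taut_luk :
    (Formula.var 0).neg.neg.impl (.var 0) ∈ Taut lukT (fullAlg lukT) := by
  intro v hv
  have hx : v 0 ∈ I01 := hv 0
  change resid lukT (resid lukT (resid lukT (v 0) 0) 0) (v 0) = 1
  rw [resid_luk_zero hx, resid_luk_zero ⟨by linarith [hx.2], by linarith [hx.1]⟩, sub_sub_cancel]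
  exact resid_eq_one_of_le lukT hx hx le_rfl

/-- The maps `x ↦ x ⊙ x` on `[1/2, 1]` and `x ↦ x ⊕ x = ¬x → x` on `[0, 1/2]` double the distance
of two points, until `b < 1/2 < a`, where `x ⊙ x` separates them. -/
lemma luk_exists_separating_of_lt {a b : ℝ} (ha : a ∈ I01) (hb : b ∈ I01) (hba : b < a) :
    ∃ α : Formula, 0 < eval lukT (fun _ => a) α ∧ eval lukT (fun _ => b) α = 0 := by
  obtain ⟨n, hn⟩ := pow_unbounded_of_one_lt (1 / (a - b)) (one_lt_two (α := ℝ))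
  rw [div_lt_iff₀ (sub_pos.mpr hba)] at hn
  induction n generalizing a b with
  | zero => linarith [ha.2, hb.1, show (2 : ℝ) ^ 0 = 1 from pow_zero 2]
  | succ n ih =>
    rw [pow_succ, mul_assoc] at hn
    have hsq : ∀ x, eval lukT (fun _ => x) ((Formula.var 0).conj (.var 0)) = max 0 (x + x - 1) :=
      fun _ => rfl
    have hdbl : ∀ x ∈ I01, eval lukT (fun _ => x) ((Formula.var 0).neg.impl (.var 0)) =
        min 1 (x + x) := fun x hx => by
      change resid lukT (resid lukT x 0) x = _
      rw [resid_luk_zero hx, resid_luk ⟨by linarith [hx.2], by linarith [hx.1]⟩ hx]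
      ring_nf
    by_cases hb2 : 1 / 2 ≤ b
    · obtain ⟨α, h₁, h₂⟩ := ih (a := a + a - 1) (b := b + b - 1) ⟨by linarith, by linarith [ha.2]⟩
        ⟨by linarith, by linarith [hb.2]⟩ (by linarith) (by convert hn using 2; ring)
      refine ⟨α.substAll ((Formula.var 0).conj (.var 0)), ?_, ?_⟩
      · rwa [eval_substAll, hsq, max_eq_right (by linarith)]
      · rwa [eval_substAll, hsq, max_eq_right (by linarith)]
    by_cases ha2 : a ≤ 1 / 2
    · obtain ⟨α, h₁, h₂⟩ := ih (a := a + a) (b := b + b) ⟨by linarith [ha.1], by linarith⟩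
        ⟨by linarith [hb.1], by linarith⟩ (by linarith) (by convert hn using 2; ring)
      refine ⟨α.substAll ((Formula.var 0).neg.impl (.var 0)), ?_, ?_⟩
      · rwa [eval_substAll, hdbl a ha, min_eq_right (by linarith)]
      · rwa [eval_substAll, hdbl b hb, min_eq_right (by linarith)]
    · refine ⟨(Formula.var 0).conj (.var 0), ?_, ?_⟩
      · rw [hsq, max_eq_right (by linarith)]
        linarith
      · rw [hsq, max_eq_left (by linarith)]

lemma luk_exists_separating (hx : x ∈ I01) (hy : y ∈ I01) (hxy : x ≠ y) :
    ∃ α : Formula, 0 < eval lukT (fun _ => x) α ∧ eval lukT (fun _ => y) α = 0 := by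
  rcases hxy.lt_or_gt with h | h
  · obtain ⟨α, h₁, h₂⟩ := luk_exists_separating_of_lt (a := 1 - x) (b := 1 - y)
      ⟨by linarith [hx.2], by linarith [hx.1]⟩ ⟨by linarith [hy.2], by linarith [hy.1]⟩
      (by linarith)
    refine ⟨α.substAll (Formula.var 0).neg, ?_, ?_⟩
    · rwa [eval_substAll, show eval lukT (fun _ => x) (Formula.var 0).neg = 1 - x from
        resid_luk_zero hx]
    · rwa [eval_substAll, show eval lukT (fun _ => y) (Formula.var 0).neg = 1 - y from
        resid_luk_zero hy]
  · exact luk_exists_separating_of_lt hx hy h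

end Lukasiewicz

lemma IsHomOn.exists_separating {t : ContTNorm} {T : TruthAlg t} {φ : ℝ → ℝ}
    (h : IsHomOn t lukT T.carrier φ) (hinj : InjOn φ T.carrier) {x y : ℝ} (hx : x ∈ T.carrier)
    (hy : y ∈ T.carrier) (hxy : x ≠ y) :
    ∃ α : Formula, 0 < eval t (fun _ => x) α ∧ eval t (fun _ => y) α = 0 := by
  obtain ⟨α, hαx, hαy⟩ := luk_exists_separating (h.mapsTo hx) (h.mapsTo hy) (hinj.ne hx hy hxy)
  rw [h.eval_comp (v := fun _ => x) (fun _ => hx)] at hαx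
  rw [h.eval_comp (v := fun _ => y) (fun _ => hy)] at hαy
  refine ⟨α, (T.subset (eval_mem_carrier (fun _ => hx) α)).1.lt_of_ne' fun h0 => ?_,
    hinj (eval_mem_carrier (fun _ => hy) α) T.zero_mem (hαy.trans h.map_zero.symm)⟩
  rw [h0, h.map_zero] at hαx
  exact lt_irrefl _ hαx

structure DyadicRoots (t : ContTNorm) where
  seq : ℕ → ℝ
  mem : ∀ n, seq n ∈ I01
  mul_self_succ : ∀ n, t.mul (seq (n + 1)) (seq (n + 1)) = seq n
  pos : 0 < seq 0
  neg_pos : 0 < resid t (seq 0) 0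

namespace DyadicRoots

variable {t : ContTNorm} (s : DyadicRoots t) {x y : ℝ}

lemma nonempty_of_neg_pos {a : ℝ} (ha : a ∈ I01) (ha0 : 0 < a) (haN : 0 < resid t a 0) :
    Nonempty (DyadicRoots t) := by
  choose r hr using fun w : I01 => t.exists_mul_self_eq w.2
  let f : I01 → I01 := fun w => ⟨r w, (hr w).1⟩
  exact ⟨{ seq := fun n => f^[n] ⟨a, ha⟩
           mem := fun n => (f^[n] ⟨a, ha⟩).2
           mul_self_succ := fun n => by rw [Function.iterate_succ_apply']; exact (hr _).2
           pos := ha0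
           neg_pos := haN }⟩

lemma neg_seq_pos (n : ℕ) : 0 < resid t (s.seq n) 0 := by
  induction n with
  | zero => exact s.neg_pos
  | succ n ih =>
    refine (resid_mem_I01 t (s.mem _) zero_mem_I01).1.lt_of_ne fun h => ih.ne' ?_
    rw [← s.mul_self_succ n]
    exact neg_mul_eq_zero (s.mem _) (s.mem _) h.symm h.symm

lemma exists_pow_eq_zero (n : ℕ) : ∃ m, t.pow (s.seq n) m = 0 :=
  t.exists_pow_eq_zero (s.mem n) (s.neg_seq_pos n)

lemma monotone_seq : Monotone s.seq := monotone_nat_of_le_succ fun n => by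
  rw [← s.mul_self_succ n]
  exact t.mul_le_left (s.mem _) (s.mem _)

lemma exists_lt_seq (hx : x ∈ I01) (hN : 0 < resid t x 0) : ∃ n, x < s.seq n := by
  have hbdd : BddAbove (Set.range s.seq) := ⟨1, by rintro _ ⟨n, rfl⟩; exact (s.mem n).2⟩
  have htend := tendsto_atTop_ciSup s.monotone_seq hbdd
  set d := ⨆ n, s.seq n
  have had : s.seq 0 ≤ d := le_ciSup hbdd 0
  have hd : d ∈ I01 := ⟨(s.mem 0).1.trans had, ciSup_le fun n => (s.mem n).2⟩
  have hsucc := htend.comp (tendsto_add_atTop_nat 1)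
  have hdd : t.mul d d = d := tendsto_nhds_unique
    (t.tendsto_mul (fun n => s.mem (n + 1)) (fun n => s.mem (n + 1)) hd hd hsucc hsucc)
    (htend.congr fun n => (s.mul_self_succ n).symm)
  exact exists_lt_of_lt_ciSup
    (lt_of_neg_eq_zero hd hx (neg_eq_zero_of_idempotent hd hdd (s.pos.trans_le had)) hN)

/-- The exponent `r` with `(seq 0) ^ r = x`, read off from `(seq n) ^ m = (seq 0) ^ (m / 2 ^ n)`. -/
def addGen (x : ℝ) : ℝ := ⨅ n, (t.powIndex (s.seq n) x : ℝ) / 2 ^ n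

lemma powIndex_succ_le (hx : 0 ≤ x) (n : ℕ) :
    t.powIndex (s.seq (n + 1)) x ≤ 2 * t.powIndex (s.seq n) x := by
  rw [← s.mul_self_succ n]
  exact t.powIndex_le_two_mul (s.mem _) (by rw [s.mul_self_succ]; exact s.exists_pow_eq_zero n) hx

lemma two_mul_powIndex_le (hx : 0 ≤ x) (n : ℕ) :
    2 * t.powIndex (s.seq n) x ≤ t.powIndex (s.seq (n + 1)) x + 1 := by
  rw [← s.mul_self_succ n]
  exact t.two_mul_powIndex_le (s.mem _) (s.exists_pow_eq_zero _) hx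

lemma tendsto_addGen (hx : 0 ≤ x) :
    Tendsto (fun n => (t.powIndex (s.seq n) x : ℝ) / 2 ^ n) atTop (𝓝 (s.addGen x)) :=
  tendsto_div_two_pow_iInf (s.powIndex_succ_le hx)

lemma addGen_nonneg : 0 ≤ s.addGen x := le_ciInf fun _ => by positivity

lemma addGen_one : s.addGen 1 = 0 := by
  simp [addGen, t.powIndex_one]

lemma addGen_anti (hx : 0 ≤ x) (hxy : x ≤ y) : s.addGen y ≤ s.addGen x :=
  le_of_tendsto_of_tendsto' (s.tendsto_addGen (hx.trans hxy)) (s.tendsto_addGen hx) fun n => by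
    gcongr
    exact t.powIndex_anti (s.mem n) (s.exists_pow_eq_zero n) hx hxy

lemma addGen_pos (hx : x ∈ I01) (hN : 0 < resid t x 0) : 0 < s.addGen x := by
  obtain ⟨n, hn⟩ := s.exists_lt_seq hx hN
  have h2 : (2 : ℝ) ≤ t.powIndex (s.seq n) x := by
    exact_mod_cast t.two_le_powIndex (s.mem n) (s.exists_pow_eq_zero n) hx.1 hn
  calc (0 : ℝ) < (2 - 1) / 2 ^ n := by positivity
    _ ≤ ((t.powIndex (s.seq n) x : ℝ) - 1) / 2 ^ n := by gcongr
    _ ≤ s.addGen x :=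
      sub_one_div_two_pow_le_iInf (s.powIndex_succ_le hx.1) (s.two_mul_powIndex_le hx.1) n

lemma addGen_mul_of_pos (hx : x ∈ I01) (hy : y ∈ I01) (hxy : 0 < t.mul x y) :
    s.addGen (t.mul x y) = s.addGen x + s.addGen y := by
  have hsum := (s.tendsto_addGen hx.1).add (s.tendsto_addGen hy.1)
  refine tendsto_nhds_unique (s.tendsto_addGen hxy.le)
    (tendsto_of_tendsto_of_tendsto_of_le_of_le (by simpa using hsum.sub (tendsto_div_two_pow 2))
      hsum (fun n => ?_) (fun n => ?_))
  · have : (t.powIndex (s.seq n) x : ℝ) + t.powIndex (s.seq n) y ≤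
        t.powIndex (s.seq n) (t.mul x y) + 2 := by
      exact_mod_cast t.add_powIndex_le_of_pos (s.mem n) (s.exists_pow_eq_zero n) hx hy hxy
    simp only [← add_div, ← sub_div]
    gcongr
    linarith
  · simp only [← add_div]
    gcongr
    exact_mod_cast t.powIndex_mul_le (s.mem n) (s.exists_pow_eq_zero n) hx hy

lemma addGen_zero_le_add (hx : x ∈ I01) (hy : y ∈ I01) (hxy : t.mul x y = 0) :
    s.addGen 0 ≤ s.addGen x + s.addGen y :=
  le_of_tendsto_of_tendsto' (s.tendsto_addGen le_rfl)
    ((s.tendsto_addGen hx.1).add (s.tendsto_addGen hy.1)) fun n => by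
      simp only [← add_div]
      gcongr
      exact_mod_cast hxy ▸ t.powIndex_mul_le (s.mem n) (s.exists_pow_eq_zero n) hx hy

lemma addGen_mul (hx : x ∈ I01) (hy : y ∈ I01) :
    s.addGen (t.mul x y) = min (s.addGen x + s.addGen y) (s.addGen 0) := by
  rcases (t.mul_mem hx hy).1.eq_or_lt with h | h
  · rw [← h, min_eq_right (s.addGen_zero_le_add hx hy h.symm)]
  · rw [← s.addGen_mul_of_pos hx hy h, min_eq_left (s.addGen_anti le_rfl h.le)]

lemma addGen_resid_add_le (hx : x ∈ I01) (hy : y ∈ I01) :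
    s.addGen (resid t x y) + s.addGen x ≤ s.addGen 0 := by
  have h := le_of_tendsto_of_tendsto'
    ((s.tendsto_addGen (resid_mem_I01 t hx hy).1).add (s.tendsto_addGen hx.1))
    ((s.tendsto_addGen le_rfl).add (tendsto_div_two_pow 1)) fun n => by
      have : (t.powIndex (s.seq n) (resid t x y) : ℝ) + t.powIndex (s.seq n) x ≤
          t.powIndex (s.seq n) 0 + 1 := by
        exact_mod_cast t.powIndex_resid_add_le (s.mem n) (s.exists_pow_eq_zero n) hx hy
      simp only [← add_div]
      gcongr
  rwa [add_zero] at h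

lemma addGen_resid (hx : x ∈ I01) (hy : y ∈ I01) :
    s.addGen (resid t x y) = max (s.addGen y - s.addGen x) 0 := by
  rcases le_total x y with hxy | hyx
  · rw [resid_eq_one_of_le t hx hy hxy, s.addGen_one,
      max_eq_right (sub_nonpos.mpr (s.addGen_anti hx.1 hxy))]
  · have hmul := s.addGen_mul hx (resid_mem_I01 t hx hy)
    rw [mul_resid hx hy, min_eq_right hyx,
      min_eq_left (by linarith [s.addGen_resid_add_le hx hy])] at hmul
    rw [max_eq_left (by linarith [s.addGen_anti hy.1 hyx]), hmul]
    ring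

def toLuk (x : ℝ) : ℝ := 1 - s.addGen x / s.addGen 0

lemma isHomOn_toLuk : IsHomOn t lukT I01 s.toLuk := by
  have hM : 0 < s.addGen 0 :=
    s.addGen_pos zero_mem_I01 (by rw [resid_zero_left zero_mem_I01]; exact one_pos)
  have hmem : ∀ x ∈ I01, s.toLuk x ∈ I01 := fun x hx =>
    ⟨sub_nonneg.mpr ((div_le_one hM).mpr (s.addGen_anti le_rfl hx.1)),
      sub_le_self _ (div_nonneg s.addGen_nonneg hM.le)⟩
  refine ⟨hmem, by simp [toLuk, div_self hM.ne'], fun x hx y hy => ?_, fun x hx y hy => ?_⟩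
  · change _ = max 0 (_ + _ - 1)
    rw [toLuk, toLuk, toLuk, s.addGen_mul hx hy, ← min_div_div_right hM.le, div_self hM.ne',
      add_div]
    simp only [min_def, max_def]
    split_ifs <;> linarith
  · rw [resid_luk (hmem x hx) (hmem y hy), toLuk, toLuk, toLuk, s.addGen_resid hx hy,
      ← max_div_div_right hM.le, zero_div, sub_div]
    simp only [min_def, max_def]
    split_ifs <;> linarith

lemma toLuk_lt_one (hx : x ∈ I01) (hN : 0 < resid t x 0) : s.toLuk x < 1 :=
  sub_lt_self _ (div_pos (s.addGen_pos hx hN)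
    (s.addGen_pos zero_mem_I01 (by rw [resid_zero_left zero_mem_I01]; exact one_pos)))

end DyadicRoots

/-- `¬x = 0` says that `x` is not a zero divisor. -/
def nonZeroDivisorsAlg (t : ContTNorm) : TruthAlg t where
  carrier := {x | x ∈ I01 ∧ (x = 0 ∨ resid t x 0 = 0)}
  subset _ hx := hx.1
  zero_mem := ⟨zero_mem_I01, Or.inl rfl⟩
  one_mem := ⟨one_mem_I01, Or.inr (resid_one_zero t)⟩
  mul_mem := by
    rintro x ⟨hx, rfl | hNx⟩ y ⟨hy, rfl | hNy⟩ <;> refine ⟨t.mul_mem hx hy, ?_⟩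
    · exact Or.inl (t.zero_mul' hy)
    · exact Or.inl (t.zero_mul' hy)
    · exact Or.inl (t.mul_zero' hx)
    · exact Or.inr (neg_mul_eq_zero hx hy hNx hNy)
  resid_mem := by
    rintro x ⟨hx, rfl | hNx⟩ y ⟨hy, rfl | hNy⟩ <;> refine ⟨resid_mem_I01 t hx hy, ?_⟩
    · exact Or.inr (by rw [resid_zero_left hy, resid_one_zero])
    · exact Or.inr (by rw [resid_zero_left hy, resid_one_zero])
    · exact Or.inl hNx
    · exact Or.inr (neg_eq_zero_of_le hy (resid_mem_I01 t hx hy) hNy (le_resid_right hx hy))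

lemma isHomOn_sign (t : ContTNorm) : IsHomOn t t (nonZeroDivisorsAlg t).carrier Real.sign := by
  have hsign : ∀ x ∈ (nonZeroDivisorsAlg t).carrier, x ≠ 0 → Real.sign x = 1 :=
    fun x hx h0 => Real.sign_of_pos (hx.1.1.lt_of_ne' h0)
  have hmem : ∀ x ∈ (nonZeroDivisorsAlg t).carrier, Real.sign x ∈ I01 := by
    rintro x ⟨hx, rfl | hNx⟩
    · rw [Real.sign_zero]
      exact zero_mem_I01
    · rw [Real.sign_of_pos (pos_of_neg_eq_zero hx hNx)]
      exact one_mem_I01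
  refine ⟨hmem, Real.sign_zero, fun x hx y hy => ?_, fun x hx y hy => ?_⟩
  · rcases hx with ⟨hxI, rfl | hNx⟩
    · rw [t.zero_mul' hy.1, Real.sign_zero, t.zero_mul' (hmem y hy)]
    rcases hy with ⟨hyI, rfl | hNy⟩
    · rw [t.mul_zero' hxI, Real.sign_zero, t.mul_zero' (hmem x ⟨hxI, Or.inr hNx⟩)]
    rw [hsign x ⟨hxI, Or.inr hNx⟩ (pos_of_neg_eq_zero hxI hNx).ne',
      hsign y ⟨hyI, Or.inr hNy⟩ (pos_of_neg_eq_zero hyI hNy).ne', t.mul_one' one_mem_I01,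
      Real.sign_of_pos (pos_of_neg_eq_zero (t.mul_mem hxI hyI) (neg_mul_eq_zero hxI hyI hNx hNy))]
  · rcases hx with ⟨hxI, rfl | hNx⟩
    · rw [resid_zero_left hy.1, Real.sign_zero, resid_zero_left (hmem y hy),
        Real.sign_of_pos one_pos]
    rw [hsign x ⟨hxI, Or.inr hNx⟩ (pos_of_neg_eq_zero hxI hNx).ne']
    rcases hy with ⟨hyI, rfl | hNy⟩
    · rw [hNx, Real.sign_zero, resid_one_zero]
    rw [hsign y ⟨hyI, Or.inr hNy⟩ (pos_of_neg_eq_zero hyI hNy).ne', resid_one_left one_mem_I01,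
      Real.sign_of_pos ((pos_of_neg_eq_zero hyI hNy).trans_le (le_resid_right hxI hyI))]

def TruthAlg.Involutive {t : ContTNorm} (T : TruthAlg t) : Prop :=
  ∀ x ∈ T.carrier, resid t (resid t x 0) 0 = x

namespace TruthAlg

variable {t : ContTNorm} {T : TruthAlg t}

lemma involutive_of_taut_luk_subset (h : Taut lukT (fullAlg lukT) ⊆ Taut t T) : T.Involutive :=
  fun x hxT =>
    have hx := T.subset hxT
    ((resid_eq_one_iff (resid_mem_I01 t (resid_mem_I01 t hx zero_mem_I01) zero_mem_I01) hx).mp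
      (h neg_neg_impl_mem_taut_luk (fun _ => x) fun _ => hxT)).antisymm (le_neg_neg hx)

lemma involutive_of_P2 (h : P2 (Taut t T)) : T.Involutive := by
  intro x hxT
  by_contra hne
  have hx := T.subset hxT
  have hNx : resid t x 0 = 0 := ((resid_mem_I01 t hx zero_mem_I01).1.eq_or_lt.resolve_right
    fun hN => hne (neg_neg_eq_of_neg_pos hx hN)).symm
  have hx1 : x ≠ 1 := by
    rintro rfl
    exact hne (by rw [resid_one_zero, resid_zero_left zero_mem_I01])
  obtain ⟨α, hαx, hα1⟩ := h t T rfl (fun _ => x) (fun _ => 1) (fun _ => hxT) (fun _ => T.one_mem)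
    fun e => hx1 (congrFun e 0)
  have hsign := (isHomOn_sign t).eval_comp (T := nonZeroDivisorsAlg t) (v := fun _ => x)
    (fun _ => ⟨hx, Or.inr hNx⟩) α
  rw [Real.sign_of_pos (pos_of_neg_eq_zero hx hNx), Real.sign_of_pos hαx, hα1] at hsign
  exact zero_ne_one hsign

lemma Involutive.neg_pos (hT : T.Involutive) {x : ℝ} (hx : x ∈ T.carrier) (hx1 : x ≠ 1) :
    0 < resid t x 0 :=
  (resid_mem_I01 t (T.subset hx) zero_mem_I01).1.lt_of_ne fun h =>
    hx1 (by rw [← hT x hx, ← h, resid_zero_left zero_mem_I01])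

lemma Involutive.exists_isHomOn_injOn (hT : T.Involutive) :
    ∃ φ, IsHomOn t lukT T.carrier φ ∧ InjOn φ T.carrier := by
  by_cases hmid : ∃ a ∈ T.carrier, 0 < a ∧ a < 1
  · obtain ⟨a, haT, ha0, ha1⟩ := hmid
    obtain ⟨s⟩ := DyadicRoots.nonempty_of_neg_pos (T.subset haT) ha0 (hT.neg_pos haT ha1.ne)
    have hφ := s.isHomOn_toLuk.mono T.subset
    refine ⟨s.toLuk, hφ, hφ.injOn fun x hx hx1 => ?_⟩
    by_contra hne
    exact (s.toLuk_lt_one (T.subset hx) (hT.neg_pos hx hne)).ne hx1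
  · push Not at hmid
    have hbool : T.carrier ⊆ (boolAlg t).carrier := fun x hx =>
      (T.subset hx).1.eq_or_lt.imp Eq.symm fun h0 => (T.subset hx).2.antisymm (hmid x hx h0)
    exact ⟨id, (isHomOn_id_boolAlg t).mono hbool, injOn_id _⟩

end TruthAlg

/-- Theorem II: a real-valued logic satisfies P2 iff it extends Łukasiewicz logic. -/
theorem P2_iff_extends_Lukasiewicz (t : ContTNorm) (T : TruthAlg t) :
    P2 (Taut t T) ↔ Taut lukT (fullAlg lukT) ⊆ Taut t T := by
  constructor
  · intro hP2
    obtain ⟨φ, hφ, hinj⟩ := (TruthAlg.involutive_of_P2 hP2).exists_isHomOn_injOn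
    exact hφ.taut_subset hinj
  · intro hLuk t' T' hT' v w hv hw hvw
    obtain ⟨i, hi⟩ := Function.ne_iff.mp hvw
    obtain ⟨φ, hφ, hinj⟩ :=
      (TruthAlg.involutive_of_taut_luk_subset (hT' ▸ hLuk)).exists_isHomOn_injOn
    obtain ⟨α, hαv, hαw⟩ := hφ.exists_separating hinj (hv i) (hw i) hi
    exact ⟨α.substAll (.var i), by rwa [eval_substAll], by rwa [eval_substAll]⟩

end
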